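/- Let T=(T₁,…,T_k) be a k-tuple in the regular Λ-polyball 𝐁_Λ(H). Then for every i∈{1,…,k} and s∈{1,…,n_i}, the noncommutative Berezin kernel intertwines T and the universal model: K_T T_{i,s}* = (S_{i,s}*⊗I_{D(T)}) K_T. -/

import Mathlib

open scoped InnerProductSpace ENNReal ComplexConjugate
open Filter Topology ContinuousLinearMap

set_option maxHeartbeats 400000
set_option synthInstance.maxHeartbeats 100000

noncomputable section

namespace Polyball

/-! ## Basic setup: words, the Hilbert space `ℓ²(𝔽_{n₁}⁺×⋯×𝔽_{n_k}⁺)` and fibered versions. -/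

variable {k : ℕ}

/-- A point of `𝔽_{n₁}⁺ × ⋯ × 𝔽_{n_k}⁺`: a `k`-tuple of words. -/
abbrev Word (n : Fin k → ℕ) : Type := ∀ i, List (Fin (n i))

/-- total length `|β₁| + ⋯ + |β_k|` -/
def totalLen {n : Fin k → ℕ} (β : Word n) : ℕ := ∑ i, (β i).length

/-- `ℓ²(𝔽_{n₁}⁺×⋯×𝔽_{n_k}⁺) ⊗ D`, realized as `D`-valued `ℓ²`. -/
abbrev L2 (n : Fin k → ℕ) (D : Type*) [NormedAddCommGroup D] [InnerProductSpace ℂ D] :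
    Type _ := lp (fun _ : Word n => D) 2

/-- the standard orthonormal basis vector `χ_α`. -/
def chi {n : Fin k → ℕ} (α : Word n) : L2 n ℂ := lp.single 2 α 1

section elem

variable {n : Fin k → ℕ} {D D' : Type*} [NormedAddCommGroup D] [InnerProductSpace ℂ D]
  [NormedAddCommGroup D'] [InnerProductSpace ℂ D']

lemma memℓp_elem (x : L2 n ℂ) (d : D) : Memℓp (fun w => x w • d) 2 := by
  apply memℓp_gen
  have hx : Summable fun w => ‖x w‖ ^ (2 : ℝ≥0∞).toReal :=
    (memℓp_gen_iff (by norm_num)).1 (lp.memℓp x)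
  have := hx.mul_right (‖d‖ ^ (2 : ℝ≥0∞).toReal)
  refine this.congr fun w => ?_
  rw [norm_smul, Real.mul_rpow (norm_nonneg _) (norm_nonneg _)]

/-- the elementary tensor `x ⊗ d` in `ℓ² ⊗ D`. -/
def elem (x : L2 n ℂ) (d : D) : L2 n D := ⟨fun w => x w • d, memℓp_elem x d⟩

/-- `B` is the ampliation `A ⊗ I_D`. -/
def IsAmpliation (A : L2 n ℂ →L[ℂ] L2 n ℂ) (B : L2 n D →L[ℂ] L2 n D) : Prop :=
  ∀ x d, B (elem x d) = elem (A x) d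

lemma memℓp_ampR (V : D →L[ℂ] D') (f : L2 n D) : Memℓp (fun w => V (f w)) 2 := by
  apply memℓp_gen
  have hf : Summable fun w => ‖f w‖ ^ (2 : ℝ≥0∞).toReal :=
    (memℓp_gen_iff (by norm_num)).1 (lp.memℓp f)
  have h2 := (hf.mul_left (‖V‖ ^ (2 : ℝ≥0∞).toReal))
  refine Summable.of_nonneg_of_le (fun w => ?_) (fun w => ?_) h2
  · positivity
  · rw [← Real.mul_rpow (norm_nonneg _) (norm_nonneg _)]
    exact Real.rpow_le_rpow (norm_nonneg _) (V.le_opNorm _) (by norm_num)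

/-- the ampliation `I_{ℓ²} ⊗ V` of an operator `V : D →L[ℂ] D'`, acting pointwise. -/
def ampR (V : D →L[ℂ] D') : L2 n D →L[ℂ] L2 n D' :=
  LinearMap.mkContinuous
    { toFun := fun f => (⟨fun w => V (f w), memℓp_ampR V f⟩ : L2 n D')
      map_add' := by intro f g; ext w; simp [lp.coeFn_add]; rfl
      map_smul' := by intro c f; ext w; simp [lp.coeFn_smul] }
    ‖V‖ (by
      intro f
      refine lp.norm_le_of_forall_sum_le (by norm_num) (by positivity) fun s => ?_
      calc ∑ w ∈ s, ‖V (f w)‖ ^ (2 : ℝ≥0∞).toReal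
          ≤ ∑ w ∈ s, (‖V‖ * ‖f w‖) ^ (2 : ℝ≥0∞).toReal := by
            refine Finset.sum_le_sum fun w _ => ?_
            exact Real.rpow_le_rpow (norm_nonneg _) (V.le_opNorm _) (by norm_num)
        _ = ‖V‖ ^ (2 : ℝ≥0∞).toReal * ∑ w ∈ s, ‖f w‖ ^ (2 : ℝ≥0∞).toReal := by
            rw [Finset.mul_sum]
            refine Finset.sum_congr rfl fun w _ => ?_
            rw [Real.mul_rpow (norm_nonneg _) (norm_nonneg _)]
        _ ≤ ‖V‖ ^ (2 : ℝ≥0∞).toReal * ‖f‖ ^ (2 : ℝ≥0∞).toReal := by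
            refine mul_le_mul_of_nonneg_left ?_ (by positivity)
            exact lp.sum_rpow_le_norm_rpow (by norm_num) f s
        _ = (‖V‖ * ‖f‖) ^ (2 : ℝ≥0∞).toReal := by
            rw [Real.mul_rpow (norm_nonneg _) (norm_nonneg _)])

end elem

/-! ## Λ-data and the twisted shifts -/

/-- The data `Λ = (Λ_{ij})` of unimodular twisting matrices with `Λ_{ji} = Λ_{ij}*`. -/
structure LambdaData (n : Fin k → ℕ) where
  lam : ∀ i j : Fin k, Fin (n i) → Fin (n j) → ℂ
  unimodular : ∀ i j s t, ‖lam i j s t‖ = 1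
  hermitian : ∀ i j s t, i ≠ j → lam j i t s = conj (lam i j s t)

variable {n : Fin k → ℕ}

/-- `𝛌_{i,j}(s,β) = ∏_b λ_{ij}(s, j_b)`. -/
def boldLam (Λ : LambdaData n) (i j : Fin k) (s : Fin (n i)) (β : List (Fin (n j))) : ℂ :=
  (β.map fun t => Λ.lam i j s t).prod

/-- the twist `𝛌_{i,1}(s,α₁)⋯𝛌_{i,i-1}(s,α_{i-1})`. -/
def twist (Λ : LambdaData n) (i : Fin k) (s : Fin (n i)) (α : Word n) : ℂ :=
  ∏ j : Fin k, if j < i then boldLam Λ i j s (α j) else 1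

/-- `S` is the `k`-tuple of twisted shifts (the universal model) associated with `Λ`. -/
def IsTwistedShift (Λ : LambdaData n) (S : ∀ i, Fin (n i) → L2 n ℂ →L[ℂ] L2 n ℂ) : Prop :=
  ∀ (i : Fin k) (s : Fin (n i)) (α : Word n),
    S i s (chi α) = twist Λ i s α • chi (Function.update α i (s :: α i))

/-! ## Tuples of operators, the maps `Φ`, `Δ`, and the regular Λ-polyball -/

section tuples

variable {H : Type*} [NormedAddCommGroup H] [InnerProductSpace ℂ H] [CompleteSpace H]

/-- `T_{i,α} := T_{i,p₁} ⋯ T_{i,p_m}` for a word `α = g_{p₁}⋯g_{p_m}`. -/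
def wordOp (T : ∀ i, Fin (n i) → H →L[ℂ] H) (i : Fin k) (α : List (Fin (n i))) : H →L[ℂ] H :=
  (α.map fun s => T i s).prod

/-- `T_β := T_{1,β₁} T_{2,β₂} ⋯ T_{k,β_k}` for `β ∈ 𝔽_{n₁}⁺×⋯×𝔽_{n_k}⁺`. -/
def fullOp (T : ∀ i, Fin (n i) → H →L[ℂ] H) (β : Word n) : H →L[ℂ] H :=
  ((List.finRange k).map fun i => wordOp T i (β i)).prod

/-- `Φ_{T_i}(X) = Σ_s T_{i,s} X T_{i,s}^*`. -/
def Phi (T : ∀ i, Fin (n i) → H →L[ℂ] H) (i : Fin k) (X : H →L[ℂ] H) : H →L[ℂ] H :=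
  ∑ s : Fin (n i), T i s ∘L X ∘L adjoint (T i s)

/-- `Δ_T(X) = (id - Φ_{T_k}) ∘ ⋯ ∘ (id - Φ_{T_1})(X)`. -/
def DeltaMap (T : ∀ i, Fin (n i) → H →L[ℂ] H) (X : H →L[ℂ] H) : H →L[ℂ] H :=
  (List.finRange k).foldl (fun Y i => Y - Phi T i Y) X

/-- `(id - Φ_{T_k}^{p_k}) ∘ ⋯ ∘ (id - Φ_{T_1}^{p₁})(I)`. -/
def partialDelta (T : ∀ i, Fin (n i) → H →L[ℂ] H) (p : Fin k → ℕ) : H →L[ℂ] H :=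
  (List.finRange k).foldl (fun Y i => Y - (Phi T i)^[p i] Y) 1

/-- the scaled tuple `rT`. -/
def scale (r : ℝ) (T : ∀ i, Fin (n i) → H →L[ℂ] H) : ∀ i, Fin (n i) → H →L[ℂ] H :=
  fun i s => (r : ℂ) • T i s

/-- membership in the regular Λ-polyball `𝐁_Λ(H)`. -/
structure InPolyball (Λ : LambdaData n) (T : ∀ i, Fin (n i) → H →L[ℂ] H) : Prop where
  contraction : ∀ i, ((1 : H →L[ℂ] H) - Phi T i 1).IsPositive
  comm : ∀ i j, i ≠ j → ∀ s t, T i s ∘L T j t = Λ.lam i j s t • (T j t ∘L T i s)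
  regular : ∀ r : ℝ, 0 ≤ r → r < 1 → (DeltaMap (scale r T) 1).IsPositive

/-- membership in the open polyball `𝐁_Λ°(H)`: `Δ_T(I)` is an invertible positive operator. -/
def InOpenPolyball (Λ : LambdaData n) (T : ∀ i, Fin (n i) → H →L[ℂ] H) : Prop :=
  InPolyball Λ T ∧ (DeltaMap T 1).IsPositive ∧ IsUnit (DeltaMap T 1)

/-- purity: `Φ_{T_i}^p(I) → 0` strongly. -/
def IsPure (T : ∀ i, Fin (n i) → H →L[ℂ] H) : Prop :=
  ∀ (i : Fin k) (x : H), Tendsto (fun p => ((Phi T i)^[p] (1 : H →L[ℂ] H)) x) atTop (𝓝 0)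

/-- completely non-coisometric. -/
def CNC (T : ∀ i, Fin (n i) → H →L[ℂ] H) : Prop :=
  ∀ h : H, (∀ p : Fin k → ℕ, ⟪partialDelta T p h, h⟫_ℂ = 0) → h = 0

/-- `R` is the positive square root of `X`. -/
def IsSqrtOf (R X : H →L[ℂ] H) : Prop := R.IsPositive ∧ R ∘L R = X

/-- the defect space `D(T)`, the closure of the range of `Δ_T(I)`. -/
def defectSpace (T : ∀ i, Fin (n i) → H →L[ℂ] H) : Submodule ℂ H :=
  (LinearMap.range (DeltaMap T (1 : H →L[ℂ] H) : H →ₗ[ℂ] H)).topologicalClosure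

instance (T : ∀ i, Fin (n i) → H →L[ℂ] H) : CompleteSpace ↥(defectSpace T) :=
  (Submodule.isClosed_topologicalClosure _).completeSpace_coe

/-- the defect space `D(T)` as a Hilbert space in its own right. -/
def DTcar (T : ∀ i, Fin (n i) → H →L[ℂ] H) : Type _ := ↥(defectSpace T)

instance (T : ∀ i, Fin (n i) → H →L[ℂ] H) : NormedAddCommGroup (DTcar T) :=
  inferInstanceAs (NormedAddCommGroup ↥(defectSpace T))
instance (T : ∀ i, Fin (n i) → H →L[ℂ] H) : InnerProductSpace ℂ (DTcar T) :=
  inferInstanceAs (InnerProductSpace ℂ ↥(defectSpace T))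
instance (T : ∀ i, Fin (n i) → H →L[ℂ] H) : CompleteSpace (DTcar T) :=
  inferInstanceAs (CompleteSpace ↥(defectSpace T))

/-- the inclusion `D(T) ↪ H`. -/
def inclDT (T : ∀ i, Fin (n i) → H →L[ℂ] H) : DTcar T →L[ℂ] H :=
  (defectSpace T).subtypeL

instance (p : Submodule ℂ H) : CompleteSpace ↥(p.topologicalClosure) :=
  (Submodule.isClosed_topologicalClosure _).completeSpace_coe

instance (K : Submodule ℂ H) : CompleteSpace ↥Kᗮ :=
  (Submodule.isClosed_orthogonal K).completeSpace_coe

/-- `K` is the noncommutative Berezin kernel of `T`: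
`K h = Σ_β χ_β ⊗ Δ_T(I)^{1/2} T_β^* h ∈ ℓ² ⊗ D(T)`. -/
def IsBerezinKernel (T : ∀ i, Fin (n i) → H →L[ℂ] H)
    (K : H →L[ℂ] L2 n (DTcar T)) : Prop :=
  ∃ R : H →L[ℂ] H, IsSqrtOf R (DeltaMap T 1) ∧
    ∀ (h : H) (β : Word n), inclDT T ((K h) β) = R (adjoint (fullOp T β) h)

end tuples

/-! ## polynomials, Hardy algebra, series -/

section algebra

variable {H : Type*} [NormedAddCommGroup H] [InnerProductSpace ℂ H] [CompleteSpace H]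

/-- evaluation of noncommutative polynomials at the tuple `T`. -/
def polyEval (T : ∀ i, Fin (n i) → H →L[ℂ] H) :
    FreeAlgebra ℂ (Σ i : Fin k, Fin (n i)) →ₐ[ℂ] (H →L[ℂ] H) :=
  FreeAlgebra.lift ℂ fun p => T p.1 p.2

/-- the set `𝒫({T_{i,s}})` of all polynomials in the `T_{i,s}` and the identity. -/
def polySet (T : ∀ i, Fin (n i) → H →L[ℂ] H) : Set (H →L[ℂ] H) :=
  Set.range (polyEval T)

/-- `A` has the formal Fourier representation `Σ_β c_β S_β`. -/
def HasFourier (S : ∀ i, Fin (n i) → L2 n ℂ →L[ℂ] L2 n ℂ) (c : Word n → ℂ)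
    (A : L2 n ℂ →L[ℂ] L2 n ℂ) : Prop :=
  Memℓp c 2 ∧ ∀ γ : Word n, HasSum (fun β => c β • fullOp S β (chi γ)) (A (chi γ))

/-- the noncommutative Hardy algebra `F^∞(𝐁_Λ)`. -/
def FInfty (S : ∀ i, Fin (n i) → L2 n ℂ →L[ℂ] L2 n ℂ) : Set (L2 n ℂ →L[ℂ] L2 n ℂ) :=
  {A | ∃ c, HasFourier S c A}

/-- the homogeneous part of degree `p` of the series `Σ_β c_β T_β`. -/
def degSum (T : ∀ i, Fin (n i) → H →L[ℂ] H) (c : Word n → ℂ) (p : ℕ) : H →L[ℂ] H :=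
  ∑' β : {β : Word n // totalLen β = p}, c β.1 • fullOp T β.1

/-- the coefficients of `φ({r T_{i,s}})`, i.e. `r^{|β|} c_β`. -/
def rCoeff (r : ℝ) (c : Word n → ℂ) : Word n → ℂ := fun β => (r : ℂ) ^ totalLen β * c β

/-- `Σ_{p≥0} f p` converges (partial sums) to `B` in operator norm. -/
def SeriesTo (f : ℕ → (H →L[ℂ] H)) (B : H →L[ℂ] H) : Prop :=
  Tendsto (fun N => ∑ p ∈ Finset.range N, f p) atTop (𝓝 B)

end algebra

/-! ## operator topologies via nets -/

section topologies

variable {H : Type*} [NormedAddCommGroup H] [InnerProductSpace ℂ H] [CompleteSpace H]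

/-- convergence in the strong operator topology along a filter. -/
def SOTTendsto {ι : Type*} (l : Filter ι) (F : ι → (H →L[ℂ] H)) (A : H →L[ℂ] H) : Prop :=
  ∀ x : H, Tendsto (fun i => F i x) l (𝓝 (A x))

/-- convergence in the weak operator topology along a filter. -/
def WOTTendsto {ι : Type*} (l : Filter ι) (F : ι → (H →L[ℂ] H)) (A : H →L[ℂ] H) : Prop :=
  ∀ x y : H, Tendsto (fun i => ⟪F i x, y⟫_ℂ) l (𝓝 ⟪A x, y⟫_ℂ)

/-- convergence in the w*-topology (σ-weak topology) along a filter. -/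
def WstarTendsto {ι : Type*} (l : Filter ι) (F : ι → (H →L[ℂ] H)) (A : H →L[ℂ] H) : Prop :=
  ∀ x y : ℕ → H, Summable (fun j => ‖x j‖ ^ 2) → Summable (fun j => ‖y j‖ ^ 2) →
    Tendsto (fun i => ∑' j, ⟪F i (x j), y j⟫_ℂ) l (𝓝 (∑' j, ⟪A (x j), y j⟫_ℂ))

/-- membership in the SOT-closure of a set of operators. -/
def InSOTClosure (𝒮 : Set (H →L[ℂ] H)) (A : H →L[ℂ] H) : Prop :=
  ∃ (ι : Type) (l : Filter ι), l.NeBot ∧ ∃ F : ι → (H →L[ℂ] H),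
    (∀ i, F i ∈ 𝒮) ∧ SOTTendsto l F A

/-- membership in the WOT-closure of a set of operators. -/
def InWOTClosure (𝒮 : Set (H →L[ℂ] H)) (A : H →L[ℂ] H) : Prop :=
  ∃ (ι : Type) (l : Filter ι), l.NeBot ∧ ∃ F : ι → (H →L[ℂ] H),
    (∀ i, F i ∈ 𝒮) ∧ WOTTendsto l F A

/-- membership in the w*-closure of a set of operators. -/
def InWstarClosure (𝒮 : Set (H →L[ℂ] H)) (A : H →L[ℂ] H) : Prop :=
  ∃ (ι : Type) (l : Filter ι), l.NeBot ∧ ∃ F : ι → (H →L[ℂ] H),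
    (∀ i, F i ∈ 𝒮) ∧ WstarTendsto l F A

end topologies

/-! ## matrices of operators, acting on `H ⊕₂ ⋯ ⊕₂ H` -/

section matrices

variable {H : Type*} [NormedAddCommGroup H] [InnerProductSpace ℂ H] [CompleteSpace H]

/-- an `m×m` matrix of operators as an operator on the Hilbert space `⊕²_{u<m} H`. -/
def matOp {m : ℕ} (M : Matrix (Fin m) (Fin m) (H →L[ℂ] H)) :
    (PiLp 2 fun _ : Fin m => H) →L[ℂ] (PiLp 2 fun _ : Fin m => H) :=
  ((PiLp.continuousLinearEquiv 2 ℂ fun _ : Fin m => H).symm :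
      ((_ : Fin m) → H) →L[ℂ] PiLp 2 fun _ : Fin m => H) ∘L
    (ContinuousLinearMap.pi fun u => ∑ v, M u v ∘L ContinuousLinearMap.proj v) ∘L
    ((PiLp.continuousLinearEquiv 2 ℂ fun _ : Fin m => H) :
      (PiLp 2 fun _ : Fin m => H) →L[ℂ] ((_ : Fin m) → H))

end matrices

/-! ## further notions: reversed Delta, multi-analytic operators, supports, holomorphic functions -/

section more

variable {H : Type*} [NormedAddCommGroup H] [InnerProductSpace ℂ H] [CompleteSpace H]

/-- `(id - Φ_{T_1}) ∘ ⋯ ∘ (id - Φ_{T_k})(X)` (reversed order). -/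
def DeltaMapRev (T : ∀ i, Fin (n i) → H →L[ℂ] H) (X : H →L[ℂ] H) : H →L[ℂ] H :=
  ((List.finRange k).reverse).foldl (fun Y i => Y - Phi T i Y) X

/-- the adjoint, with the scalar field fixed to `ℂ`. -/
def adj {E F : Type*} [NormedAddCommGroup E] [InnerProductSpace ℂ E]
    [CompleteSpace E] [NormedAddCommGroup F] [InnerProductSpace ℂ F] [CompleteSpace F]
    (V : E →L[ℂ] F) : F →L[ℂ] E :=
  ContinuousLinearMap.adjoint V

/-- a partial isometry between Hilbert spaces. -/
def IsPartialIsometry {E F : Type*} [NormedAddCommGroup E] [InnerProductSpace ℂ E]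
    [CompleteSpace E] [NormedAddCommGroup F] [InnerProductSpace ℂ F] [CompleteSpace F]
    (V : E →L[ℂ] F) : Prop :=
  V ∘L adjoint V ∘L V = V

/-- the restriction of an operator to an invariant subspace. -/
def restrictOp {E : Type*} [NormedAddCommGroup E] [InnerProductSpace ℂ E]
    {M : Submodule ℂ E} (B : E →L[ℂ] E) (h : ∀ x ∈ M, B x ∈ M) : ↥M →L[ℂ] ↥M :=
  ContinuousLinearMap.codRestrict (B ∘L M.subtypeL) M (fun x => h x x.2)

end more

/-- a bundled Hilbert space over `ℂ`. -/
structure HilbertPkg : Type 1 where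
  carrier : Type
  [grp : NormedAddCommGroup carrier]
  [ips : InnerProductSpace ℂ carrier]
  [cpl : CompleteSpace carrier]

attribute [instance] HilbertPkg.grp HilbertPkg.ips HilbertPkg.cpl

section analytic

variable {D F : Type*} [NormedAddCommGroup D] [InnerProductSpace ℂ D] [CompleteSpace D]
  [NormedAddCommGroup F] [InnerProductSpace ℂ F] [CompleteSpace F]

/-- `A` is multi-analytic with respect to the given ampliations of the universal model. -/
def MultiAnalytic (SE : ∀ i, Fin (n i) → L2 n D →L[ℂ] L2 n D)
    (SF : ∀ i, Fin (n i) → L2 n F →L[ℂ] L2 n F)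
    (A : L2 n D →L[ℂ] L2 n F) : Prop :=
  ∀ i s, A ∘L SE i s = SF i s ∘L A

/-- a closed subspace reducing for all of the `SD i s`. -/
def ReducedBy (SD : ∀ i, Fin (n i) → L2 n D →L[ℂ] L2 n D)
    (M : Submodule ℂ (L2 n D)) : Prop :=
  IsClosed (M : Set (L2 n D)) ∧
    ∀ i s, (∀ x ∈ M, SD i s x ∈ M) ∧ ∀ x ∈ M, adjoint (SD i s) x ∈ M

/-- the support of a multi-analytic operator: the smallest reducing subspace containing
the closure of the range of `A*`. -/
def suppOf (SD : ∀ i, Fin (n i) → L2 n D →L[ℂ] L2 n D)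
    (A : L2 n D →L[ℂ] L2 n F) : Submodule ℂ (L2 n D) :=
  sInf {M : Submodule ℂ (L2 n D) | ReducedBy SD M ∧ ∀ y, adjoint A y ∈ M}

/-- a Beurling type jointly invariant subspace: the full range of an inner multi-analytic
operator. -/
def BeurlingType (S : ∀ i, Fin (n i) → L2 n ℂ →L[ℂ] L2 n ℂ)
    (SD : ∀ i, Fin (n i) → L2 n D →L[ℂ] L2 n D) (M : Submodule ℂ (L2 n D)) : Prop :=
  ∃ (P : HilbertPkg) (SL : ∀ i, Fin (n i) → L2 n P.carrier →L[ℂ] L2 n P.carrier),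
    (∀ i s, IsAmpliation (S i s) (SL i s)) ∧
    ∃ Ψ : L2 n P.carrier →L[ℂ] L2 n D,
      MultiAnalytic SL SD Ψ ∧ IsPartialIsometry Ψ ∧ (M : Set (L2 n D)) = Set.range Ψ

end analytic

section holo

variable (Λ : LambdaData n)

/-- `φ = Σ_β a_β Z_β` is a free holomorphic function on `𝐁_Λ°`: the series converges in
operator norm at every point of `𝐁_Λ°(H)`, for every Hilbert space `H`. -/
def FreeHolo (a : Word n → ℂ) : Prop :=
  ∀ (P : HilbertPkg) (X : ∀ i, Fin (n i) → P.carrier →L[ℂ] P.carrier),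
    InOpenPolyball Λ X → ∃ B, SeriesTo (degSum X a) B

variable {H : Type*} [NormedAddCommGroup H] [InnerProductSpace ℂ H] [CompleteSpace H]

/-- the value `φ(X)` of the free holomorphic function with coefficients `a` at the tuple `X`. -/
def holoEval (a : Word n → ℂ) (X : ∀ i, Fin (n i) → H →L[ℂ] H) : H →L[ℂ] H := by
  classical exact if h : ∃ B, SeriesTo (degSum X a) B then h.choose else 0

/-- the set of values `‖φ(X)‖`, over all Hilbert spaces and all `X ∈ 𝐁_Λ°(H)`. -/
def holoNormSet (a : Word n → ℂ) : Set ℝ :=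
  {c | ∃ (P : HilbertPkg) (X : ∀ i, Fin (n i) → P.carrier →L[ℂ] P.carrier),
    InOpenPolyball Λ X ∧ c = ‖holoEval a X‖}

/-- the set of values `‖[φ_{uv}(X)]‖` for a matrix of free holomorphic functions. -/
def holoMatNormSet {m : ℕ} (a : Fin m → Fin m → Word n → ℂ) : Set ℝ :=
  {c | ∃ (P : HilbertPkg) (X : ∀ i, Fin (n i) → P.carrier →L[ℂ] P.carrier),
    InOpenPolyball Λ X ∧ c = ‖matOp (Matrix.of fun u v => holoEval (a u v) X)‖}

/-- membership in `H^∞(𝐁_Λ°)`. -/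
def BddHolo (a : Word n → ℂ) : Prop :=
  FreeHolo Λ a ∧ BddAbove (holoNormSet Λ a)

/-- membership in `A(𝐁_Λ°)`: free holomorphic with a continuous extension to `𝐁_Λ(H)`
for every Hilbert space `H`. -/
def ContHolo (a : Word n → ℂ) : Prop :=
  FreeHolo Λ a ∧
  ∀ P : HilbertPkg, ∃ g : (∀ i, Fin (n i) → P.carrier →L[ℂ] P.carrier) →
      (P.carrier →L[ℂ] P.carrier),
    ContinuousOn g {X | InPolyball Λ X} ∧
    ∀ X, InOpenPolyball Λ X → g X = holoEval a X

end holo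

/-! ## characteristic functions -/

section charfn

variable {H : Type*} [NormedAddCommGroup H] [InnerProductSpace ℂ H] [CompleteSpace H]

/-- `T` admits a characteristic function: there are a Hilbert space `E` and a multi-analytic
operator `Ψ : ℓ²⊗E → ℓ²⊗D(T)` with `K_T K_T^* + Ψ Ψ^* = I`. -/
def AdmitsCharFn (S : ∀ i, Fin (n i) → L2 n ℂ →L[ℂ] L2 n ℂ)
    (T : ∀ i, Fin (n i) → H →L[ℂ] H)
    (K : H →L[ℂ] L2 n (DTcar T))
    (SD : ∀ i, Fin (n i) → L2 n (DTcar T) →L[ℂ] L2 n (DTcar T)) : Prop :=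
  ∃ (P : HilbertPkg) (SE : ∀ i, Fin (n i) → L2 n P.carrier →L[ℂ] L2 n P.carrier),
    (∀ i s, IsAmpliation (S i s) (SE i s)) ∧
    ∃ Ψ : L2 n P.carrier →L[ℂ] L2 n (DTcar T),
      MultiAnalytic SE SD Ψ ∧ K ∘L adj K + Ψ ∘L adj Ψ = 1

/-- the operator `I - K_T K_T^*`. -/
def QOp (T : ∀ i, Fin (n i) → H →L[ℂ] H) (K : H →L[ℂ] L2 n (DTcar T)) :
    L2 n (DTcar T) →L[ℂ] L2 n (DTcar T) :=
  1 - K ∘L adj K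

/-- the space `M_T`, the closure of the range of `I - K_T K_T^*`. -/
def MTspace (T : ∀ i, Fin (n i) → H →L[ℂ] H) (K : H →L[ℂ] L2 n (DTcar T)) :
    Submodule ℂ (L2 n (DTcar T)) :=
  (LinearMap.range (QOp T K : L2 n (DTcar T) →ₗ[ℂ] L2 n (DTcar T))).topologicalClosure

/-- the space `M_T` as a Hilbert space in its own right. -/
def MTcar (T : ∀ i, Fin (n i) → H →L[ℂ] H) (K : H →L[ℂ] L2 n (DTcar T)) : Type _ :=
  ↥(MTspace T K)

instance (T : ∀ i, Fin (n i) → H →L[ℂ] H) (K : H →L[ℂ] L2 n (DTcar T)) :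
    NormedAddCommGroup (MTcar T K) :=
  inferInstanceAs (NormedAddCommGroup ↥(MTspace T K))
instance (T : ∀ i, Fin (n i) → H →L[ℂ] H) (K : H →L[ℂ] L2 n (DTcar T)) :
    InnerProductSpace ℂ (MTcar T K) :=
  inferInstanceAs (InnerProductSpace ℂ ↥(MTspace T K))
instance (T : ∀ i, Fin (n i) → H →L[ℂ] H) (K : H →L[ℂ] L2 n (DTcar T)) :
    CompleteSpace (MTcar T K) :=
  inferInstanceAs (CompleteSpace ↥((LinearMap.range (QOp T K : L2 n (DTcar T) →ₗ[ℂ] L2 n (DTcar T))).topologicalClosure))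

/-- the inclusion `M_T ↪ ℓ²⊗D(T)`. -/
def inclMT (T : ∀ i, Fin (n i) → H →L[ℂ] H) (K : H →L[ℂ] L2 n (DTcar T)) :
    MTcar T K →L[ℂ] L2 n (DTcar T) :=
  (MTspace T K).subtypeL

/-- the characteristic function `Θ_T = (I - K_T K_T^*)^{1/2} K_{M_T}^*`, built from a
square root `Qh` of `I - K_T K_T^*` and the Berezin kernel `KM` of the tuple `M_T`. -/
def ThetaOf {E : Type*} [NormedAddCommGroup E] [InnerProductSpace ℂ E] [CompleteSpace E]
    (T : ∀ i, Fin (n i) → H →L[ℂ] H) (K : H →L[ℂ] L2 n (DTcar T))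
    (Qh : L2 n (DTcar T) →L[ℂ] L2 n (DTcar T))
    (KM : MTcar T K →L[ℂ] L2 n E) :
    L2 n E →L[ℂ] L2 n (DTcar T) :=
  Qh ∘L inclMT T K ∘L adj KM

end charfn



/-! The Λ-commutation relations give `T_{i,s} T_β = t · T_{β'}`, where `β'` prepends `g_s` to `β_i`
and the scalar `t = 𝛌_{i,1}(s,β₁)⋯𝛌_{i,i-1}(s,β_{i-1})` is exactly the weight with which
`S_{i,s}` maps `χ_β` to `χ_{β'}`. Taking adjoints, the `β`-coordinate of `K_T T_{i,s}^* h` is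
`t̄ · (K_T h)_{β'}`, and so is the `β`-coordinate of `(S_{i,s}^* ⊗ I) K_T h`. -/

section intertwining

variable {k : ℕ} {n : Fin k → ℕ}

section ampliation

variable {D : Type*} [NormedAddCommGroup D] [InnerProductSpace ℂ D]

lemma elem_chi [DecidableEq (Word n)] (β : Word n) (d : D) :
    (elem (chi β) d : L2 n D) = lp.single 2 β d := by
  refine lp.ext <| funext fun w => ?_
  by_cases h : w = β
  · subst h; simp [elem, chi]
  · simp [elem, chi, h]

lemma elem_smul (c : ℂ) (x : L2 n ℂ) (d : D) : (elem (c • x) d : L2 n D) = c • elem x d :=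
  lp.ext <| funext fun _ => smul_assoc c (x _) d

lemma adjoint_apply_of_isAmpliation [CompleteSpace D] {A : L2 n ℂ →L[ℂ] L2 n ℂ}
    {B : L2 n D →L[ℂ] L2 n D} (hB : IsAmpliation A B) {c : Word n → ℂ}
    {σ : Word n → Word n} (hA : ∀ α, A (chi α) = c α • chi (σ α)) (f : L2 n D) (β : Word n) :
    (adjoint B f) β = conj (c β) • f (σ β) := by
  classical
  refine ext_inner_right ℂ fun d => ?_
  rw [← lp.inner_single_right, ← elem_chi, adjoint_inner_left, hB, hA, elem_smul,
    inner_smul_right, elem_chi, lp.inner_single_right, inner_smul_left, Complex.conj_conj]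

end ampliation

variable {H : Type*} [NormedAddCommGroup H] [InnerProductSpace ℂ H]
  {Λ : LambdaData n} {T : ∀ i, Fin (n i) → H →L[ℂ] H}

def LambdaCommute (Λ : LambdaData n) (T : ∀ i, Fin (n i) → H →L[ℂ] H) : Prop :=
  ∀ i j, i ≠ j → ∀ s t, T i s * T j t = Λ.lam i j s t • (T j t * T i s)

lemma InPolyball.lambdaCommute [CompleteSpace H] (hT : InPolyball Λ T) : LambdaCommute Λ T :=
  hT.comm

lemma wordOp_cons (i : Fin k) (s : Fin (n i)) (α : List (Fin (n i))) :
    wordOp T i (s :: α) = T i s * wordOp T i α :=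
  List.prod_cons

lemma LambdaCommute.mul_wordOp (hT : LambdaCommute Λ T) {i j : Fin k}
    (hij : i ≠ j) (s : Fin (n i)) (α : List (Fin (n j))) :
    T i s * wordOp T j α = boldLam Λ i j s α • (wordOp T j α * T i s) := by
  induction α with
  | nil => simp [wordOp, boldLam]
  | cons t α ih =>
    have hlam : boldLam Λ i j s (t :: α) = Λ.lam i j s t * boldLam Λ i j s α := List.prod_cons
    rw [wordOp_cons, hlam, ← mul_assoc, hT i j hij s t, smul_mul_assoc, mul_assoc, ih,
      mul_smul_comm, ← mul_assoc, mul_smul, smul_smul]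

lemma LambdaCommute.mul_prod_wordOp (hT : LambdaCommute Λ T) (i : Fin k)
    (s : Fin (n i)) (β : Word n) {l : List (Fin k)} (hl : l.Pairwise (· < ·)) (hi : i ∈ l) :
    T i s * (l.map fun j => wordOp T j (β j)).prod
      = (l.map fun j => if j < i then boldLam Λ i j s (β j) else 1).prod •
        (l.map fun j => wordOp T j (Function.update β i (s :: β i) j)).prod := by
  induction l with
  | nil => exact absurd hi List.not_mem_nil
  | cons j l ih =>
    obtain ⟨hjl, hl⟩ := List.pairwise_cons.1 hl
    simp only [List.map_cons, List.prod_cons]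
    by_cases hji : j = i
    · subst hji
      have htwist : (l.map fun x => if x < j then boldLam Λ j x s (β x) else 1).prod = 1 :=
        List.prod_eq_one fun c hc => by
          obtain ⟨x, hx, rfl⟩ := List.mem_map.1 hc
          exact if_neg (lt_asymm (hjl x hx))
      have hupdate : (l.map fun x => wordOp T x (Function.update β j (s :: β j) x))
          = l.map fun x => wordOp T x (β x) :=
        List.map_congr_left fun x hx => by rw [Function.update_of_ne (hjl x hx).ne']
      rw [if_neg (lt_irrefl j), one_mul, htwist, one_smul, Function.update_self, hupdate,
        wordOp_cons, mul_assoc]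
    · have hil : i ∈ l := (List.mem_cons.1 hi).resolve_left (Ne.symm hji)
      rw [if_pos (hjl i hil), Function.update_of_ne hji, ← mul_assoc,
        hT.mul_wordOp (Ne.symm hji), smul_mul_assoc, mul_assoc, ih hl hil, mul_smul_comm,
        mul_smul, smul_smul]

lemma LambdaCommute.comp_fullOp (hT : LambdaCommute Λ T) (i : Fin k)
    (s : Fin (n i)) (β : Word n) :
    T i s ∘L fullOp T β = twist Λ i s β • fullOp T (Function.update β i (s :: β i)) := by
  rw [twist, Fin.prod_univ_def]
  exact hT.mul_prod_wordOp i s β (List.pairwise_lt_finRange k) (List.mem_finRange i)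

end intertwining

/-- The noncommutative Berezin kernel intertwines `T` and the universal
model: `K_T T_{i,s}^* = (S_{i,s}^* ⊗ I_{D(T)}) K_T`. -/
theorem statement_2 {k : ℕ} {n : Fin k → ℕ} (Λ : LambdaData n)
    (S : ∀ i, Fin (n i) → L2 n ℂ →L[ℂ] L2 n ℂ) (hS : IsTwistedShift Λ S)
    {H : Type} [NormedAddCommGroup H] [InnerProductSpace ℂ H] [CompleteSpace H]
    (T : ∀ i, Fin (n i) → H →L[ℂ] H) (hT : InPolyball Λ T)
    (K : H →L[ℂ] L2 n (DTcar T)) (hK : IsBerezinKernel T K)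
    (SD : ∀ i, Fin (n i) → L2 n (DTcar T) →L[ℂ] L2 n (DTcar T))
    (hSD : ∀ i s, IsAmpliation (S i s) (SD i s)) :
    ∀ (i : Fin k) (s : Fin (n i)), K ∘L adj (T i s) = adj (SD i s) ∘L K := by
  intro i s
  obtain ⟨R, -, hKR⟩ := hK
  ext h β
  set β' := Function.update β i (s :: β i)
  have hshift : adjoint (fullOp T β) (adjoint (T i s) h)
      = conj (twist Λ i s β) • adjoint (fullOp T β') h := by
    rw [← comp_apply, ← adjoint_comp, hT.lambdaCommute.comp_fullOp, map_smulₛₗ, smul_apply]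
  have hmodel : (adjoint (SD i s) (K h)) β = conj (twist Λ i s β) • (K h) β' :=
    adjoint_apply_of_isAmpliation (hSD i s) (hS i s) (K h) β
  apply Subtype.val_injective
  change inclDT T (K (adjoint (T i s) h) β) = inclDT T ((adjoint (SD i s) (K h)) β)
  rw [hKR, hshift, map_smul, hmodel, map_smul, hKR]

end Polyball
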